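/- arXiv:2011.10176 — 2 statements merged into one kernel-verified Lean document; each statement's English description precedes it below -/
import Mathlib

section
/- Let n ≥ 1, let 0 < q ≤ λ ≤ γ < ∞ and set p := qγ/λ. Let φ : ℝⁿ → ℂ be a Schwartz function. There is a constant C > 0 depending only on n, q, λ, γ such that: for every locally integrable f : ℝⁿ → ℂ for which ∫ |φ_t(x−y)| |f(y)| dy < ∞ for all x ∈ ℝⁿ and t > 0, and for every t > 0, one has ‖φ_t ∗ f‖_{M_p^γ} ≤ C · t^{n(1/γ − 1/λ)} · ‖M*_φ f‖_{M_q^λ}. -/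
open MeasureTheory
open scoped ENNReal NNReal BigOperators

noncomputable section

abbrev Euc (n : ℕ) := EuclideanSpace ℝ (Fin n)

/-- Closed axis-parallel cube with lower corner `c` and sidelength `ℓ`. -/
def cube {n : ℕ} (c : Euc n) (ℓ : ℝ) : Set (Euc n) :=
  {y : Euc n | ∀ i, c i ≤ y i ∧ y i ≤ c i + ℓ}

/-- The cube with the same center as `cube c ℓ` and twice its sidelength. -/
def cube2 {n : ℕ} (c : Euc n) (ℓ : ℝ) : Set (Euc n) :=
  cube (WithLp.toLp 2 (fun i => c i - ℓ / 2) : Euc n) (2 * ℓ)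

/-- Morrey "norm" (in `ℝ≥0∞`) of a nonnegative-valued function `u`. -/
def morrey (n : ℕ) (q lam : ℝ) (u : Euc n → ℝ≥0∞) : ℝ≥0∞ :=
  ⨆ (c : Euc n) (ℓ : ℝ) (_ : 0 < ℓ),
    volume (cube c ℓ) ^ (1 / lam - 1 / q) *
      (∫⁻ y in cube c ℓ, (u y) ^ q) ^ (1 / q)

/-- Dilation `φ_t(x) = t^{-n} φ(x/t)`. -/
def dilat (n : ℕ) (φ : Euc n → ℂ) (t : ℝ) (x : Euc n) : ℂ :=
  (((t ^ n)⁻¹ : ℝ) : ℂ) * φ (t⁻¹ • x)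

/-- Convolution `(φ_t ∗ f)(x)`. -/
def conv (n : ℕ) (φ f : Euc n → ℂ) (t : ℝ) (x : Euc n) : ℂ :=
  ∫ y, dilat n φ t (x - y) * f y

/-- Nontangential maximal function `M*_φ f`. -/
def ntMax (n : ℕ) (φ f : Euc n → ℂ) (x : Euc n) : ℝ≥0∞ :=
  ⨆ (t : ℝ) (_ : 0 < t) (y : Euc n) (_ : dist x y < t), (‖conv n φ f t y‖₊ : ℝ≥0∞)

/-- Smooth (radial) maximal function `M_φ f`. -/
def smMax (n : ℕ) (φ f : Euc n → ℂ) (x : Euc n) : ℝ≥0∞ :=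
  ⨆ (t : ℝ) (_ : 0 < t), (‖conv n φ f t x‖₊ : ℝ≥0∞)

/-- Truncated maximal function `m_φ f`. -/
def trMax (n : ℕ) (φ f : Euc n → ℂ) (x : Euc n) : ℝ≥0∞ :=
  ⨆ (t : ℝ) (_ : 0 < t ∧ t ≤ 1), (‖conv n φ f t x‖₊ : ℝ≥0∞)

/-- Fourier transform `f̂(ξ) = ∫ e^{-i x·ξ} f(x) dx`. -/
def ft (n : ℕ) (f : Euc n → ℂ) (ξ : Euc n) : ℂ :=
  ∫ x, Complex.exp (-(Complex.I * ((inner ℝ x ξ : ℝ) : ℂ))) * f x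

/-- A dyadic cube `2^k (m + [0,1)^n)`, recorded by its data. -/
structure DyadicCube (n : ℕ) where
  k : ℤ
  m : Fin n → ℤ

/-- The underlying set of a dyadic cube. -/
def DyadicCube.set {n : ℕ} (D : DyadicCube n) : Set (Euc n) :=
  {y : Euc n | ∀ i, (2 : ℝ) ^ D.k * (D.m i : ℝ) ≤ y i ∧ y i < (2 : ℝ) ^ D.k * ((D.m i : ℝ) + 1)}

/-- Sidelength of a dyadic cube. -/
def DyadicCube.len {n : ℕ} (D : DyadicCube n) : ℝ := (2 : ℝ) ^ D.k

/-- The cube with the same center as the dyadic cube `D` and twice its sidelength. -/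
def DyadicCube.double {n : ℕ} (D : DyadicCube n) : Set (Euc n) :=
  cube (WithLp.toLp 2 (fun i => (2 : ℝ) ^ D.k * (D.m i : ℝ) - (2 : ℝ) ^ D.k / 2) : Euc n) (2 * (2 : ℝ) ^ D.k)

/-- The norm `‖{s_Q}‖_{λ,q}` of a family of scalars indexed by dyadic cubes. -/
def sNorm (n : ℕ) (q lam : ℝ) (s : DyadicCube n → ℂ) : ℝ≥0∞ :=
  ⨆ J : DyadicCube n,
    (volume J.set ^ (q / lam - 1) *
      ∑' Q : {Q : DyadicCube n // Q.set ⊆ J.set},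
        (volume (Q.1).set ^ (1 / q - 1 / lam) * (‖s Q.1‖₊ : ℝ≥0∞)) ^ q) ^ (1 / q)

/-- `(q,λ,∞)`-atom supported in the set `Q` (with given volume normalization). -/
def IsAtomOn (n : ℕ) (q lam : ℝ) (Q : Set (Euc n)) (a : Euc n → ℂ) : Prop :=
  Measurable a ∧ Function.support a ⊆ Q ∧
    (∀ x, (‖a x‖₊ : ℝ≥0∞) ≤ volume Q ^ (-(1 / lam))) ∧
    ∀ α : Fin n → ℕ, ((∑ i, α i : ℕ) : ℤ) ≤ ⌊(n : ℝ) * (1 / q - 1)⌋ →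
      ∫ x, (∏ i, ((x i : ℝ) : ℂ) ^ α i) * a x = 0



-- Auxiliary lemmas ----------------------------------------------------------

lemma my_cube_eq {n : ℕ} (c : Euc n) (ℓ : ℝ) :
    cube c ℓ = (MeasurableEquiv.toLp 2 (Fin n → ℝ)).symm ⁻¹'
      (Set.univ.pi fun i => Set.Icc (c i) (c i + ℓ)) := by
  ext y
  simp [cube, Set.mem_pi, Pi.le_def, forall_and]

lemma my_cube_meas {n : ℕ} (c : Euc n) (ℓ : ℝ) : MeasurableSet (cube c ℓ) := by
  rw [my_cube_eq]
  exact (MeasurableSet.univ_pi fun i => measurableSet_Icc).preimage (MeasurableEquiv.measurable _)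

lemma my_cube_vol {n : ℕ} (c : Euc n) {ℓ : ℝ} (hℓ : 0 ≤ ℓ) :
    volume (cube c ℓ) = ENNReal.ofReal (ℓ ^ n) := by
  rw [my_cube_eq, (EuclideanSpace.volume_preserving_symm_measurableEquiv_toLp (Fin n)).measure_preimage
    ((MeasurableSet.univ_pi fun i => measurableSet_Icc).nullMeasurableSet)]
  rw [volume_pi_pi]
  simp [Real.volume_Icc, ENNReal.ofReal_pow hℓ]

lemma my_morrey_le (n : ℕ) (q lam : ℝ) (u : Euc n → ℝ≥0∞) (c : Euc n) {ℓ : ℝ} (hℓ : 0 < ℓ) :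
    volume (cube c ℓ) ^ (1 / lam - 1 / q) * (∫⁻ y in cube c ℓ, (u y) ^ q) ^ (1 / q) ≤
      morrey n q lam u :=
  le_iSup_of_le c (le_iSup_of_le ℓ (le_iSup_of_le hℓ le_rfl))

lemma my_div_le {a b M : ℝ≥0∞} (ha : a ≠ 0) (ha' : a ≠ ⊤) (h : a * b ≤ M) : b ≤ a⁻¹ * M := by
  calc b = a⁻¹ * (a * b) := by rw [← mul_assoc, ENNReal.inv_mul_cancel ha ha', one_mul]
    _ ≤ a⁻¹ * M := mul_le_mul_right h _

lemma my_split {a B : ℝ≥0∞} {p q : ℝ} (hq : 0 ≤ q) (hpq : q ≤ p) (h : a ≤ B) :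
    a ^ p ≤ B ^ (p - q) * a ^ q := by
  have h1 : a ^ p = a ^ (p - q) * a ^ q := by
    rw [← ENNReal.rpow_add_of_nonneg _ _ (by linarith) hq]
    congr 1; ring
  rw [h1]
  exact mul_le_mul_left (ENNReal.rpow_le_rpow h (by linarith)) _

lemma my_key {K I A M : ℝ≥0∞} {lam q : ℝ} (hq : 0 < q) (hK0 : K ≠ 0) (hKt : K ≠ ⊤)
    (h1 : A ^ q * K ≤ I) (h2 : K ^ (1/lam - 1/q) * I ^ (1/q) ≤ M) :
    A ≤ M * K ^ (-(1/lam)) := by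
  have hKa : ∀ r : ℝ, K ^ r ≠ 0 := fun r => by
    simp [ENNReal.rpow_eq_zero_iff, hK0, hKt]
  have hKt' : ∀ r : ℝ, K ^ r ≠ ⊤ := fun r => by
    simp [ENNReal.rpow_eq_top_iff, hK0, hKt]
  have h3 : I ^ (1/q) ≤ K ^ (-(1/lam - 1/q)) * M := by
    rw [ENNReal.rpow_neg]
    exact my_div_le (hKa _) (hKt' _) h2
  have h4 : A * K ^ (1/q) ≤ I ^ (1/q) := by
    have h5 := ENNReal.rpow_le_rpow h1 (one_div_pos.mpr hq).le
    rwa [ENNReal.mul_rpow_of_nonneg _ _ (one_div_pos.mpr hq).le, ← ENNReal.rpow_mul,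
      mul_one_div_cancel hq.ne', ENNReal.rpow_one] at h5
  have h5 : A * K ^ (1/q) ≤ K ^ (-(1/lam - 1/q)) * M := h4.trans h3
  calc A = A * K ^ (1/q) * K ^ (-(1/q)) := by
        rw [mul_assoc, ← ENNReal.rpow_add _ _ hK0 hKt]
        simp
    _ ≤ K ^ (-(1/lam - 1/q)) * M * K ^ (-(1/q)) := mul_le_mul_left h5 _
    _ = M * (K ^ (-(1/lam - 1/q)) * K ^ (-(1/q))) := by ring
    _ = M * K ^ (-(1/lam)) := by
        rw [← ENNReal.rpow_add _ _ hK0 hKt]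
        congr 1; ring

lemma my_int_bound {W I M : ℝ≥0∞} {lam q : ℝ} (hq : 0 < q) (hlam : 0 < lam)
    (hW0 : W ≠ 0) (hWt : W ≠ ⊤)
    (h2 : W ^ (1/lam - 1/q) * I ^ (1/q) ≤ M) : I ≤ W ^ (1 - q/lam) * M ^ q := by
  have hWa : ∀ r : ℝ, W ^ r ≠ 0 := fun r => by simp [ENNReal.rpow_eq_zero_iff, hW0, hWt]
  have hWt' : ∀ r : ℝ, W ^ r ≠ ⊤ := fun r => by simp [ENNReal.rpow_eq_top_iff, hW0, hWt]
  have h3 : I ^ (1/q) ≤ W ^ (-(1/lam - 1/q)) * M := by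
    rw [ENNReal.rpow_neg]
    exact my_div_le (hWa _) (hWt' _) h2
  have h4 := ENNReal.rpow_le_rpow h3 hq.le
  rw [← ENNReal.rpow_mul, one_div_mul_cancel hq.ne', ENNReal.rpow_one,
    ENNReal.mul_rpow_of_nonneg _ _ hq.le, ← ENNReal.rpow_mul] at h4
  have he : -(1/lam - 1/q) * q = 1 - q/lam := by field_simp; ring
  rwa [he] at h4

theorem stmt5 (n : ℕ) (hn : 1 ≤ n) (q lam γ : ℝ) (hq : 0 < q) (hqlam : q ≤ lam)
    (hlamγ : lam ≤ γ) :
    ∃ C : ℝ, 0 < C ∧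
      ∀ (φ : SchwartzMap (Euc n) ℂ) (f : Euc n → ℂ),
        MeasureTheory.LocallyIntegrable f volume →
        (∀ (x : Euc n) (t : ℝ), 0 < t →
          (∫⁻ y, (‖dilat n (⇑φ) t (x - y)‖₊ : ℝ≥0∞) * (‖f y‖₊ : ℝ≥0∞)) < ⊤) →
        ∀ (t : ℝ), 0 < t →
          morrey n (q * γ / lam) γ (fun x => (‖conv n (⇑φ) f t x‖₊ : ℝ≥0∞)) ≤
            ENNReal.ofReal C * ENNReal.ofReal (t ^ ((n : ℝ) * (1 / γ - 1 / lam))) *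
              morrey n q lam (ntMax n (⇑φ) f) := by
  have hn0 : (0:ℝ) < n := by exact_mod_cast hn
  have h0lam : 0 < lam := lt_of_lt_of_le hq hqlam
  have h0γ : 0 < γ := lt_of_lt_of_le h0lam hlamγ
  set p : ℝ := q * γ / lam with hp_def
  have hp : 0 < p := by positivity
  have hqp : q ≤ p := by
    rw [hp_def, le_div_iff₀ h0lam]
    nlinarith
  set e : ℝ := (n:ℝ) * (1/γ - 1/lam) with he_def
  refine ⟨(n:ℝ) ^ (-e), Real.rpow_pos_of_pos hn0 _, ?_⟩
  intro φ f _hf _hconv t ht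
  set M : ℝ≥0∞ := morrey n q lam (ntMax n (⇑φ) f) with hM
  have hte : 0 < t ^ e := Real.rpow_pos_of_pos ht e
  by_cases hMtop : M = ⊤
  · have h1 : ENNReal.ofReal ((n:ℝ)^(-e)) ≠ 0 := by
      simp only [ne_eq, ENNReal.ofReal_eq_zero, not_le]
      exact Real.rpow_pos_of_pos hn0 _
    have h2 : ENNReal.ofReal (t ^ e) ≠ 0 := by
      simp only [ne_eq, ENNReal.ofReal_eq_zero, not_le]
      exact hte
    rw [hMtop, ENNReal.mul_top (mul_ne_zero h1 h2)]
    exact le_top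
  set g : Euc n → ℝ≥0∞ := fun x => (‖conv n (⇑φ) f t x‖₊ : ℝ≥0∞) with hg
  have hnt : ∀ x y : Euc n, dist y x < t → g x ≤ ntMax n (⇑φ) f y := by
    intro x y hxy
    exact le_iSup_of_le t (le_iSup_of_le ht (le_iSup_of_le x (le_iSup_of_le hxy le_rfl)))
  set s : ℝ := t / n with hs_def
  have hs : 0 < s := div_pos ht hn0
  have hdist : ∀ x : Euc n, ∀ y ∈ cube (WithLp.toLp 2 (fun i => x i - s/2) : Euc n) s, dist y x < t := by
    intro x y hy
    simp only [cube, Set.mem_setOf_eq] at hy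
    have h1 : dist y x ≤ Real.sqrt ((t/2)^2) := by
      rw [EuclideanSpace.dist_eq]
      apply Real.sqrt_le_sqrt
      have hsum : ∑ i, dist (y i) (x i) ^ 2 ≤ ∑ _i : Fin n, (s/2)^2 := by
        apply Finset.sum_le_sum
        intro i _
        have h := hy i
        rw [Real.dist_eq, sq_abs]
        nlinarith [h.1, h.2]
      refine hsum.trans ?_
      rw [Finset.sum_const, Finset.card_univ, Fintype.card_fin, nsmul_eq_mul]
      have h2 : (n:ℝ) * (s/2)^2 = t^2/(4*n) := by
        rw [hs_def]; field_simp; ring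
      have h3 : (t/2)^2 = t^2/4 := by ring
      rw [h2, h3, div_le_div_iff₀ (by positivity) (by positivity)]
      have hn1 : (1:ℝ) ≤ n := by exact_mod_cast hn
      nlinarith [sq_nonneg t]
    rw [Real.sqrt_sq (by positivity)] at h1
    linarith
  set K : ℝ≥0∞ := ENNReal.ofReal (s ^ n) with hK_def
  have hK0 : K ≠ 0 := by
    simp only [hK_def, ne_eq, ENNReal.ofReal_eq_zero, not_le]
    positivity
  have hKt : K ≠ ⊤ := ENNReal.ofReal_ne_top
  have hgB : ∀ x : Euc n, g x ≤ M * K ^ (-(1/lam)) := by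
    intro x
    set c : Euc n := (WithLp.toLp 2 (fun i => x i - s/2) : Euc n) with hc
    have hvol : volume (cube c s) = K := my_cube_vol c hs.le
    have h1 : g x ^ q * K ≤ ∫⁻ y in cube c s, (ntMax n (⇑φ) f y) ^ q := by
      calc g x ^ q * K = ∫⁻ _y in cube c s, g x ^ q := by rw [setLIntegral_const, hvol]
        _ ≤ ∫⁻ y in cube c s, (ntMax n (⇑φ) f y) ^ q :=
          setLIntegral_mono' (my_cube_meas _ _) fun y hy =>
            ENNReal.rpow_le_rpow (hnt x y (hdist x y hy)) hq.le
    have h2 : K ^ (1/lam - 1/q) * (∫⁻ y in cube c s, (ntMax n (⇑φ) f y) ^ q) ^ (1/q) ≤ M := by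
      have h3 := my_morrey_le n q lam (ntMax n (⇑φ) f) c hs
      rwa [hvol] at h3
    exact my_key hq hK0 hKt h1 h2
  simp only [morrey]
  refine iSup_le fun c => iSup_le fun ℓ => iSup_le fun hℓ => ?_
  set W : ℝ≥0∞ := volume (cube c ℓ) with hW_def
  have hWv : W = ENNReal.ofReal (ℓ ^ n) := my_cube_vol c hℓ.le
  have hW0 : W ≠ 0 := by
    rw [hWv]
    simp only [ne_eq, ENNReal.ofReal_eq_zero, not_le]
    positivity
  have hWt : W ≠ ⊤ := by rw [hWv]; exact ENNReal.ofReal_ne_top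
  have hIq : ∫⁻ y in cube c ℓ, g y ^ q ≤ W ^ (1 - q/lam) * M ^ q := by
    have hmono : ∫⁻ y in cube c ℓ, g y ^ q ≤ ∫⁻ y in cube c ℓ, (ntMax n (⇑φ) f y) ^ q :=
      lintegral_mono fun y => ENNReal.rpow_le_rpow (hnt y y (by simpa using ht)) hq.le
    exact hmono.trans (my_int_bound hq h0lam hW0 hWt (my_morrey_le n q lam (ntMax n (⇑φ) f) c hℓ))
  set B : ℝ≥0∞ := M * K ^ (-(1/lam)) with hB_def
  have hBt : B ≠ ⊤ := by
    refine ENNReal.mul_ne_top hMtop ?_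
    simp [ENNReal.rpow_eq_top_iff, hK0, hKt]
  have hIp : ∫⁻ y in cube c ℓ, g y ^ p ≤ B ^ (p - q) * (W ^ (1 - q/lam) * M ^ q) := by
    calc ∫⁻ y in cube c ℓ, g y ^ p ≤ ∫⁻ y in cube c ℓ, B ^ (p-q) * g y ^ q :=
          lintegral_mono fun y => my_split hq.le hqp (hgB y)
      _ = B ^ (p-q) * ∫⁻ y in cube c ℓ, g y ^ q :=
          lintegral_const_mul' _ _ (ENNReal.rpow_ne_top_of_nonneg (by linarith) hBt)
      _ ≤ B ^ (p-q) * (W ^ (1 - q/lam) * M ^ q) := mul_le_mul_right hIq _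
  have e1 : (∫⁻ y in cube c ℓ, g y ^ p) ^ (1/p) ≤
      B ^ ((p-q)*(1/p)) * (W ^ ((1-q/lam)*(1/p)) * M ^ (q*(1/p))) := by
    have h6 := ENNReal.rpow_le_rpow hIp (one_div_pos.mpr hp).le
    rwa [ENNReal.mul_rpow_of_nonneg _ _ (one_div_pos.mpr hp).le,
      ENNReal.mul_rpow_of_nonneg _ _ (one_div_pos.mpr hp).le,
      ← ENNReal.rpow_mul, ← ENNReal.rpow_mul, ← ENNReal.rpow_mul] at h6
  have e2 : W ^ (1/γ - 1/p) * (B ^ ((p-q)*(1/p)) * (W ^ ((1-q/lam)*(1/p)) * M ^ (q*(1/p))))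
      = B ^ ((p-q)*(1/p)) * M ^ (q*(1/p)) := by
    have hz : (1/γ - 1/p) + (1 - q/lam)*(1/p) = 0 := by
      rw [hp_def]; field_simp; ring
    calc W ^ (1/γ - 1/p) * (B ^ ((p-q)*(1/p)) * (W ^ ((1-q/lam)*(1/p)) * M ^ (q*(1/p))))
        = B ^ ((p-q)*(1/p)) * M ^ (q*(1/p)) * (W ^ (1/γ-1/p) * W ^ ((1-q/lam)*(1/p))) := by
          ring
      _ = B ^ ((p-q)*(1/p)) * M ^ (q*(1/p)) * W ^ ((1/γ-1/p) + (1-q/lam)*(1/p)) := by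
          rw [← ENNReal.rpow_add _ _ hW0 hWt]
      _ = B ^ ((p-q)*(1/p)) * M ^ (q*(1/p)) := by rw [hz, ENNReal.rpow_zero, mul_one]
  have e3 : B ^ ((p-q)*(1/p)) * M ^ (q*(1/p)) = M * K ^ (-(1/lam) * ((p-q)*(1/p))) := by
    have hr1 : (0:ℝ) ≤ (p-q)*(1/p) := mul_nonneg (by linarith) (by positivity)
    have hr2 : (0:ℝ) ≤ q*(1/p) := by positivity
    have hone : (p-q)*(1/p) + q*(1/p) = 1 := by field_simp; ring
    rw [hB_def, ENNReal.mul_rpow_of_nonneg _ _ hr1, ← ENNReal.rpow_mul K]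
    calc M ^ ((p-q)*(1/p)) * K ^ (-(1/lam) * ((p-q)*(1/p))) * M ^ (q*(1/p))
        = M ^ ((p-q)*(1/p)) * M ^ (q*(1/p)) * K ^ (-(1/lam) * ((p-q)*(1/p))) := by ring
      _ = M ^ ((p-q)*(1/p) + q*(1/p)) * K ^ (-(1/lam) * ((p-q)*(1/p))) := by
          rw [ENNReal.rpow_add_of_nonneg _ _ hr1 hr2]
      _ = M * K ^ (-(1/lam) * ((p-q)*(1/p))) := by rw [hone, ENNReal.rpow_one]
  have e4 : K ^ (-(1/lam) * ((p-q)*(1/p))) =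
      ENNReal.ofReal (t ^ e) * ENNReal.ofReal ((n:ℝ)^(-e)) := by
    have hexp : -(1/lam) * ((p-q)*(1/p)) = e / (n:ℝ) := by
      rw [hp_def, he_def]; field_simp; ring
    rw [hexp, hK_def, ENNReal.ofReal_rpow_of_pos (by positivity),
      ← Real.rpow_natCast s n, ← Real.rpow_mul hs.le]
    have hne : (n:ℝ) * (e / n) = e := by field_simp
    rw [hne, hs_def, Real.div_rpow ht.le hn0.le, div_eq_mul_inv, ← Real.rpow_neg hn0.le,
      ENNReal.ofReal_mul (by positivity)]
  calc W ^ (1/γ - 1/p) * (∫⁻ y in cube c ℓ, g y ^ p) ^ (1/p)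
      ≤ W ^ (1/γ - 1/p) * (B ^ ((p-q)*(1/p)) * (W ^ ((1-q/lam)*(1/p)) * M ^ (q*(1/p)))) :=
        mul_le_mul_right e1 _
    _ = B ^ ((p-q)*(1/p)) * M ^ (q*(1/p)) := e2
    _ = M * (ENNReal.ofReal (t^e) * ENNReal.ofReal ((n:ℝ)^(-e))) := by rw [e3, e4]
    _ = ENNReal.ofReal ((n:ℝ)^(-e)) * ENNReal.ofReal (t^e) * M := by ring

end
end

section
/- Let n ≥ 1, 0 < q ≤ 1 and q ≤ λ < r < ∞. Then for all axis-parallel cubes J and Q in ℝⁿ of positive sidelength, one has |Q|^{q/r} · |J|^{q/λ − 1} · |J ∩ Q*|^{1 − q/r} ≤ 2ⁿ · |Q|^{q/λ}, where Q* denotes the cube with the same center as Q and twice its sidelength. -/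
open MeasureTheory
open scoped ENNReal NNReal BigOperators

noncomputable section

lemma vol_cube {n : ℕ} (c : Euc n) (ℓ : ℝ) :
    volume (cube c ℓ) = ENNReal.ofReal ℓ ^ n := by
  have hset : cube c ℓ = (MeasurableEquiv.toLp 2 (Fin n → ℝ)).symm ⁻¹'
      (Set.univ.pi fun i => Set.Icc (c i) (c i + ℓ)) := by
    ext y
    simp only [cube, Set.mem_setOf_eq, Set.mem_preimage, Set.mem_pi, Set.mem_univ,
      true_implies, Set.mem_Icc]
    exact ⟨fun h i => ⟨(h i).1, (h i).2⟩, fun h i => ⟨(h i).1, (h i).2⟩⟩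
  rw [hset, (EuclideanSpace.volume_preserving_symm_measurableEquiv_toLp (Fin n)).measure_preimage
      (by measurability)]
  rw [volume_pi_pi]
  simp [Real.volume_Icc]

lemma rpow_anti {x y : ℝ≥0∞} {z : ℝ} (hxy : x ≤ y) (hz : z ≤ 0) : y ^ z ≤ x ^ z := by
  rw [← neg_neg z, ENNReal.rpow_neg x, ENNReal.rpow_neg y]
  exact ENNReal.inv_le_inv.2 (ENNReal.rpow_le_rpow hxy (neg_nonneg.2 hz))

theorem stmt9 (n : ℕ) (hn : 1 ≤ n) (q lam r : ℝ) (hq : 0 < q) (hq1 : q ≤ 1)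
    (hqlam : q ≤ lam) (hlamr : lam < r)
    (cJ cQ : Euc n) (ℓJ ℓQ : ℝ) (hJ : 0 < ℓJ) (hQ : 0 < ℓQ) :
    volume (cube cQ ℓQ) ^ (q / r) * volume (cube cJ ℓJ) ^ (q / lam - 1) *
        volume (cube cJ ℓJ ∩ cube2 cQ ℓQ) ^ (1 - q / r) ≤
      (2 : ℝ≥0∞) ^ n * volume (cube cQ ℓQ) ^ (q / lam) := by
  have hrpos : (0:ℝ) < r := lt_trans (lt_of_lt_of_le hq hqlam) hlamr
  have hlampos : (0:ℝ) < lam := lt_of_lt_of_le hq hqlam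
  set a : ℝ := q / r with ha
  set b : ℝ := q / lam with hb
  have hapos : 0 < a := div_pos hq hrpos
  have hab : a < b := div_lt_div_of_pos_left hq hlampos hlamr
  have hb1 : b ≤ 1 := by rw [hb, div_le_one hlampos]; exact hqlam
  set vJ : ℝ≥0∞ := volume (cube cJ ℓJ) with hvJ
  set vQ : ℝ≥0∞ := volume (cube cQ ℓQ) with hvQ
  have hvJeq : vJ = ENNReal.ofReal ℓJ ^ n := vol_cube cJ ℓJ
  have hvQeq : vQ = ENNReal.ofReal ℓQ ^ n := vol_cube cQ ℓQ
  have hvJ0 : vJ ≠ 0 := by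
    rw [hvJeq]; exact pow_ne_zero _ (ne_of_gt (ENNReal.ofReal_pos.2 hJ))
  have hvJtop : vJ ≠ ⊤ := by rw [hvJeq]; exact ENNReal.pow_ne_top ENNReal.ofReal_ne_top
  have hvQ0 : vQ ≠ 0 := by
    rw [hvQeq]; exact pow_ne_zero _ (ne_of_gt (ENNReal.ofReal_pos.2 hQ))
  have hvQtop : vQ ≠ ⊤ := by rw [hvQeq]; exact ENNReal.pow_ne_top ENNReal.ofReal_ne_top
  have h2n : (1:ℝ≥0∞) ≤ 2 ^ n := one_le_pow_of_one_le' (by norm_num : (1:ℝ≥0∞) ≤ 2) n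
  have h2ntop : ((2:ℝ≥0∞) ^ n) ≠ ⊤ := ENNReal.pow_ne_top (by norm_num)
  have hvQ2 : volume (cube2 cQ ℓQ) = 2 ^ n * vQ := by
    rw [cube2, vol_cube, hvQeq, ENNReal.ofReal_mul (by norm_num), mul_pow]
    norm_num
  rcases le_total vJ vQ with hle | hle
  · have h1 : volume (cube cJ ℓJ ∩ cube2 cQ ℓQ) ≤ vJ :=
      measure_mono Set.inter_subset_left
    calc vQ ^ a * vJ ^ (b - 1) * volume (cube cJ ℓJ ∩ cube2 cQ ℓQ) ^ (1 - a)
        ≤ vQ ^ a * vJ ^ (b - 1) * vJ ^ (1 - a) :=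
          mul_le_mul' le_rfl (ENNReal.rpow_le_rpow h1 (by linarith))
      _ = vQ ^ a * vJ ^ (b - a) := by
          rw [mul_assoc, ← ENNReal.rpow_add _ _ hvJ0 hvJtop]; ring_nf
      _ ≤ vQ ^ a * vQ ^ (b - a) :=
          mul_le_mul' le_rfl (ENNReal.rpow_le_rpow hle (by linarith))
      _ = vQ ^ b := by rw [← ENNReal.rpow_add _ _ hvQ0 hvQtop]; ring_nf
      _ ≤ 2 ^ n * vQ ^ b := le_mul_of_one_le_left zero_le' h2n
  · have h1 : volume (cube cJ ℓJ ∩ cube2 cQ ℓQ) ≤ 2 ^ n * vQ := by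
      rw [← hvQ2]; exact measure_mono Set.inter_subset_right
    calc vQ ^ a * vJ ^ (b - 1) * volume (cube cJ ℓJ ∩ cube2 cQ ℓQ) ^ (1 - a)
        ≤ vQ ^ a * vQ ^ (b - 1) * (2 ^ n * vQ) ^ (1 - a) :=
          mul_le_mul' (mul_le_mul' le_rfl (rpow_anti hle (by linarith)))
            (ENNReal.rpow_le_rpow h1 (by linarith))
      _ = (2 ^ n : ℝ≥0∞) ^ (1 - a) * (vQ ^ a * vQ ^ (b - 1) * vQ ^ (1 - a)) := by
          rw [ENNReal.mul_rpow_of_ne_top h2ntop hvQtop]; ring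
      _ ≤ 2 ^ n * vQ ^ b := by
          refine mul_le_mul' ?_ (le_of_eq ?_)
          · calc ((2:ℝ≥0∞) ^ n) ^ (1 - a) ≤ ((2:ℝ≥0∞) ^ n) ^ (1:ℝ) :=
                ENNReal.rpow_le_rpow_of_exponent_le h2n (by linarith)
              _ = 2 ^ n := ENNReal.rpow_one _
          · rw [mul_assoc, ← ENNReal.rpow_add _ _ hvQ0 hvQtop,
              ← ENNReal.rpow_add _ _ hvQ0 hvQtop]
            congr 1; ring

end
end
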